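/- Let a1, a2 > 0, b > −1, 0 < z < 1, and let L be the generalized-Hahn moment functional L[f] = Σ_{x=0}^{∞} f(x)·(a1)_x (a2)_x z^x / ((b+1)_x x!). Let (P_n)_{n≥0} be a monic orthogonal polynomial sequence for L with recurrence coefficients β_n, γ_n, and let A_k(n), −2 ≤ k ≤ 2, be the unique coefficients in the expansion z(x+a1)(x+a2)·P_n(x+1) = Σ_{k=−2}^{2} A_k(n) P_{n+k}(x). Then for all n ≥ 1: A_{−1}(n) = γ_n (β_n + β_{n−1} − n + b + 1). -/

import Mathlib

/-!
Pairing the expansion of `λ(x) P_n(x+1)` with `P_{n-1}` isolates `A_{-1}(n) h_{n-1}`. The weight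
satisfies the Pearson relation `λ(x) w(x) = φ(x+1) w(x+1)`, and `φ(0) = 0`, so shifting the
summation index turns this pairing into `L[P_n · φ(x) P_{n-1}(x-1)]`. As `φ(x) P_{n-1}(x-1)` is
monic of degree `n+1`, orthogonality evaluates that as (its subleading coefficient minus that of
`P_{n+1}`) times `h_n = γ_n h_{n-1}`. The subleading coefficients follow from the Taylor shift and
from the recurrence, which lowers the subleading coefficient of `P_k` by `β_k` at each step.
-/

open Polynomial Filter Topology

namespace Polynomial

section CommSemiring

variable {R : Type*} [CommSemiring R]

theorem nextCoeff_X : (X : R[X]).nextCoeff = 0 := by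
  simpa using nextCoeff_X_add_C (0 : R)

theorem Monic.taylor {p : R[X]} (hp : p.Monic) (r : R) : (taylor r p).Monic :=
  (leadingCoeff_taylor r p).trans hp

theorem nextCoeff_taylor (p : R[X]) (r : R) :
    (taylor r p).nextCoeff = p.nextCoeff + p.natDegree * p.leadingCoeff * r := by
  rcases Nat.eq_zero_or_pos p.natDegree with h0 | hpos
  · simp [nextCoeff, natDegree_taylor, h0]
  obtain ⟨k, hk⟩ : ∃ k, p.natDegree = k + 1 := ⟨_, (Nat.succ_pred_eq_of_pos hpos).symm⟩
  have hlin : (hasseDeriv k p).natDegree < 2 := by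
    have := natDegree_hasseDeriv_le p k
    omega
  rw [nextCoeff_of_natDegree_pos (by rwa [natDegree_taylor]), nextCoeff_of_natDegree_pos hpos,
    natDegree_taylor, hk, Nat.add_sub_cancel, taylor_coeff, eval_eq_sum_range' hlin]
  simp only [Finset.sum_range_succ, Finset.sum_range_zero, hasseDeriv_coeff, leadingCoeff, hk,
    Nat.choose_self, zero_add, add_comm 1 k, Nat.choose_succ_self_right]
  push_cast
  ring

theorem Monic.nextCoeff_X_mul_X_add_C_mul {p : R[X]} (hp : p.Monic) (c : R) :
    (X * (X + C c) * p).nextCoeff = c + p.nextCoeff := by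
  rw [(monic_X.mul (monic_X_add_C c)).nextCoeff_mul hp, monic_X.nextCoeff_mul (monic_X_add_C c),
    nextCoeff_X_add_C, nextCoeff_X, zero_add]

theorem Monic.natDegree_X_mul_X_add_C_mul [Nontrivial R] {p : R[X]} (hp : p.Monic) (c : R) :
    (X * (X + C c) * p).natDegree = p.natDegree + 2 := by
  rw [(monic_X.mul (monic_X_add_C c)).natDegree_mul hp, monic_X.natDegree_mul (monic_X_add_C c),
    natDegree_X, natDegree_X_add_C, add_comm]

end CommSemiring

end Polynomial

structure IsMonicOrthogonal {R : Type*} [CommRing R] (L : R[X] →ₗ[R] R) (P : ℕ → R[X])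
    (h : ℕ → R) : Prop where
  monic : ∀ n, (P n).Monic
  natDegree_eq : ∀ n, (P n).natDegree = n
  apply_mul : ∀ n m, L (P n * P m) = if n = m then h n else 0

namespace IsMonicOrthogonal

variable {R : Type*} [CommRing R] {L : R[X] →ₗ[R] R} {P : ℕ → R[X]} {h : ℕ → R}

theorem coeff_self (hP : IsMonicOrthogonal L P h) (n : ℕ) : (P n).coeff n = 1 := by
  simpa [hP.natDegree_eq n] using (hP.monic n).coeff_natDegree

theorem apply_mul_C_mul (hP : IsMonicOrthogonal L P h) (c : R) (n m : ℕ) :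
    L (P n * (C c * P m)) = c * if n = m then h n else 0 := by
  rw [C_mul', mul_smul_comm, map_smul, hP.apply_mul, smul_eq_mul]

theorem degree_sub_C_mul_lt (hP : IsMonicOrthogonal L P h) {k : ℕ} {q : R[X]}
    (hq : q.degree < ↑(k + 1)) : (q - C (q.coeff k) * P k).degree < k := by
  rw [degree_lt_iff_coeff_zero] at hq ⊢
  intro m hm
  rcases hm.eq_or_lt with rfl | hm
  · simp [hP.coeff_self]
  · have hPm : (P k).coeff m = 0 := coeff_eq_zero_of_natDegree_lt (by rwa [hP.natDegree_eq])
    simp [hq m hm, hPm]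

theorem apply_mul_eq_zero_of_degree_lt (hP : IsMonicOrthogonal L P h) {k : ℕ} {q : R[X]}
    (hq : q.degree < k) : L (P k * q) = 0 := by
  suffices ∀ d ≤ k, ∀ q : R[X], q.degree < d → L (P k * q) = 0 from this k le_rfl q hq
  intro d
  induction d with
  | zero =>
    intro _ q hq
    rw [degree_lt_iff_coeff_zero] at hq
    rw [show q = 0 from ext fun m => hq m m.zero_le, mul_zero, map_zero]
  | succ d ih =>
    intro hd q hq
    calc L (P k * q) = L (P k * (q - C (q.coeff d) * P d)) + L (P k * (C (q.coeff d) * P d)) := by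
          rw [← map_add, ← mul_add, sub_add_cancel]
      _ = 0 := by
        rw [ih (by omega) _ (hP.degree_sub_C_mul_lt hq), hP.apply_mul_C_mul, if_neg (by omega),
          mul_zero, add_zero]

theorem apply_mul_of_degree_lt_succ (hP : IsMonicOrthogonal L P h) {k : ℕ} {q : R[X]}
    (hq : q.degree < ↑(k + 1)) : L (P k * q) = q.coeff k * h k := by
  calc L (P k * q) = L (P k * (q - C (q.coeff k) * P k)) + L (P k * (C (q.coeff k) * P k)) := by
        rw [← map_add, ← mul_add, sub_add_cancel]
    _ = q.coeff k * h k := by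
      rw [hP.apply_mul_eq_zero_of_degree_lt (hP.degree_sub_C_mul_lt hq), hP.apply_mul_C_mul,
        if_pos rfl, zero_add]

theorem apply_mul_of_monic [Nontrivial R] (hP : IsMonicOrthogonal L P h) {n : ℕ} {q : R[X]}
    (hq : q.Monic) (hqdeg : q.natDegree = n + 1) :
    L (P n * q) = (q.nextCoeff - (P (n + 1)).nextCoeff) * h n := by
  have hPdeg : (P (n + 1)).natDegree = n + 1 := hP.natDegree_eq _
  have hlow : (q - P (n + 1)).degree < ↑(n + 1) := by
    have hPmonic := hP.monic (n + 1)
    have := degree_sub_lt_left (q := P (n + 1))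
      (by rw [degree_eq_natDegree hq.ne_zero, degree_eq_natDegree hPmonic.ne_zero, hqdeg, hPdeg])
      hq.ne_zero (by rw [hq.leadingCoeff, hPmonic.leadingCoeff])
    rwa [degree_eq_natDegree hq.ne_zero, hqdeg] at this
  calc L (P n * q) = L (P n * P (n + 1)) + L (P n * (q - P (n + 1))) := by
        rw [← map_add, ← mul_add, add_sub_cancel]
    _ = (q.nextCoeff - (P (n + 1)).nextCoeff) * h n := by
      rw [hP.apply_mul, if_neg (by omega), zero_add, hP.apply_mul_of_degree_lt_succ hlow,
        coeff_sub, nextCoeff_of_natDegree_pos (by omega), nextCoeff_of_natDegree_pos (by omega),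
        hqdeg, hPdeg, Nat.add_sub_cancel]

theorem apply_mul_sum_smul (hP : IsMonicOrthogonal L P h) {ι : Type*} (s : Finset ι) (c : ι → R)
    (e : ι → ℕ) (m : ℕ) [DecidablePred fun i => e i = m] :
    L (P m * ∑ i ∈ s, c i • P (e i)) = (∑ i ∈ s with e i = m, c i) * h m := by
  simp_rw [Finset.mul_sum, mul_smul_comm, map_sum, map_smul, hP.apply_mul, Finset.sum_filter,
    Finset.sum_mul, smul_eq_mul, mul_ite, mul_zero, ite_zero_mul, eq_comm (a := m)]

theorem apply_succ_eq [Nontrivial R] (hP : IsMonicOrthogonal L P h) {β γ : ℕ → R}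
    (hrec : ∀ n, X * P n = P (n + 1) + C (β n) * P n + C (γ n) * P (n - 1)) (n : ℕ) :
    h (n + 1) = γ (n + 1) * h n := by
  have hdeg : (X * P n).degree < ↑(n + 1 + 1) := by
    rw [X_mul, degree_mul_X, degree_eq_natDegree (hP.monic n).ne_zero, hP.natDegree_eq]
    exact_mod_cast Nat.lt_succ_self _
  calc h (n + 1) = L (P (n + 1) * (X * P n)) := by
        rw [hP.apply_mul_of_degree_lt_succ hdeg, coeff_X_mul, hP.coeff_self, one_mul]
    _ = L (P n * (X * P (n + 1))) := by ring_nf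
    _ = γ (n + 1) * h n := by
      rw [hrec, Nat.add_sub_cancel, mul_add, mul_add, map_add, map_add, hP.apply_mul,
        hP.apply_mul_C_mul, hP.apply_mul_C_mul, if_neg (by omega), if_neg (by omega), if_pos rfl,
        mul_zero, zero_add, zero_add]

end IsMonicOrthogonal

theorem nextCoeff_succ_of_recurrence {R : Type*} [CommRing R] [Nontrivial R] {P : ℕ → R[X]}
    (hmonic : ∀ n, (P n).Monic) (hdeg : ∀ n, (P n).natDegree = n) {β γ : ℕ → R} (hγ0 : γ 0 = 0)
    (hrec : ∀ n, X * P n = P (n + 1) + C (β n) * P n + C (γ n) * P (n - 1)) (n : ℕ) :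
    (P (n + 1)).nextCoeff = (P n).nextCoeff - β n := by
  have hXP : (X * P n).coeff n = (P n).nextCoeff := by
    have hdegX : (X * P n).natDegree = n + 1 := by
      rw [monic_X.natDegree_mul (hmonic n), natDegree_X, hdeg, add_comm]
    have := monic_X.nextCoeff_mul (hmonic n)
    rw [nextCoeff_of_natDegree_pos (by omega), hdegX, Nat.add_sub_cancel] at this
    rwa [nextCoeff_X, zero_add] at this
  have hlower : γ n * (P (n - 1)).coeff n = 0 := by
    rcases n.eq_zero_or_pos with rfl | hn
    · rw [hγ0, zero_mul]
    · rw [coeff_eq_zero_of_natDegree_lt (by rw [hdeg]; omega), mul_zero]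
  have := congr_arg (coeff · n) (hrec n)
  simp only [coeff_add, coeff_C_mul, hXP, hlower] at this
  have hlead : (P n).coeff n = 1 := by simpa [hdeg] using (hmonic n).coeff_natDegree
  rw [nextCoeff_of_natDegree_pos (by rw [hdeg]; omega), hdeg, Nat.add_sub_cancel, this, hlead]
  ring

theorem summable_pow_mul_of_ratio_tendsto {w : ℕ → ℝ} {ρ : ℝ} (hρ : ρ < 1)
    (hw : ∀ᶠ x in atTop, w x ≠ 0) (hratio : Tendsto (fun x => ‖w (x + 1)‖ / ‖w x‖) atTop (𝓝 ρ))
    (d : ℕ) : Summable fun x : ℕ => (x : ℝ) ^ d * w x := by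
  refine summable_of_ratio_test_tendsto_lt_one hρ ?_ ?_
  · filter_upwards [hw, eventually_ne_atTop 0] with x hwx hx
    exact mul_ne_zero (pow_ne_zero _ (Nat.cast_ne_zero.mpr hx)) hwx
  · have hpow : Tendsto (fun x : ℕ => ((1 + 1 * (x : ℝ)) / (0 + 1 * x)) ^ d) atTop (𝓝 1) := by
      simpa using (tendsto_add_mul_div_add_mul_atTop_nhds (1 : ℝ) 0 1 one_ne_zero).pow d
    have hlim : Tendsto (fun x : ℕ => ((1 + 1 * (x : ℝ)) / (0 + 1 * x)) ^ d *
        (‖w (x + 1)‖ / ‖w x‖)) atTop (𝓝 ρ) := by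
      simpa using hpow.mul hratio
    refine hlim.congr' ?_
    filter_upwards [eventually_ne_atTop 0] with x hx
    have hx' : (x : ℝ) ≠ 0 := Nat.cast_ne_zero.mpr hx
    simp only [norm_mul, norm_pow, Real.norm_natCast, one_mul, zero_add, div_pow]
    push_cast
    field_simp
    ring

theorem summable_eval_mul_of_ratio_tendsto {w : ℕ → ℝ} {ρ : ℝ} (hρ : ρ < 1)
    (hw : ∀ᶠ x in atTop, w x ≠ 0) (hratio : Tendsto (fun x => ‖w (x + 1)‖ / ‖w x‖) atTop (𝓝 ρ))
    (f : ℝ[X]) : Summable fun x : ℕ => f.eval (x : ℝ) * w x := by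
  simp_rw [eval_eq_sum_range, Finset.sum_mul, mul_assoc]
  exact summable_sum fun i _ => (summable_pow_mul_of_ratio_tendsto hρ hw hratio i).mul_left _

noncomputable def momentFunctional (w : ℕ → ℝ)
    (hw : ∀ f : ℝ[X], Summable fun x : ℕ => f.eval (x : ℝ) * w x) : ℝ[X] →ₗ[ℝ] ℝ where
  toFun f := ∑' x : ℕ, f.eval (x : ℝ) * w x
  map_add' f g := by simp only [eval_add, add_mul]; exact (hw f).tsum_add (hw g)
  map_smul' c f := by
    simp only [eval_smul, smul_eq_mul, mul_assoc, RingHom.id_apply]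
    exact tsum_mul_left

theorem momentFunctional_apply (w : ℕ → ℝ)
    (hw : ∀ f : ℝ[X], Summable fun x : ℕ => f.eval (x : ℝ) * w x) (f : ℝ[X]) :
    momentFunctional w hw f = ∑' x : ℕ, f.eval (x : ℝ) * w x := rfl

theorem momentFunctional_mul_taylor_one {w : ℕ → ℝ}
    (hw : ∀ f : ℝ[X], Summable fun x : ℕ => f.eval (x : ℝ) * w x) {lam phi : ℝ[X]}
    (hpearson : ∀ x : ℕ, lam.eval (x : ℝ) * w x = phi.eval ((x : ℝ) + 1) * w (x + 1))
    (hphi : phi.eval 0 = 0) (g : ℝ[X]) :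
    momentFunctional w hw (lam * taylor 1 g) = momentFunctional w hw (phi * g) := by
  rw [momentFunctional_apply, momentFunctional_apply, (hw (phi * g)).tsum_eq_zero_add]
  simp only [eval_mul, Nat.cast_zero, hphi, zero_mul, zero_add, Nat.cast_add, Nat.cast_one,
    taylor_eval]
  exact tsum_congr fun x => by linear_combination g.eval ((x : ℝ) + 1) * hpearson x

theorem momentFunctional_mul_mul_taylor_one {w : ℕ → ℝ}
    (hw : ∀ f : ℝ[X], Summable fun x : ℕ => f.eval (x : ℝ) * w x) {lam phi : ℝ[X]}
    (hpearson : ∀ x : ℕ, lam.eval (x : ℝ) * w x = phi.eval ((x : ℝ) + 1) * w (x + 1))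
    (hphi : phi.eval 0 = 0) (f g : ℝ[X]) :
    momentFunctional w hw (f * (lam * taylor 1 g)) =
      momentFunctional w hw (g * (phi * taylor (-1) f)) := by
  have hf : taylor 1 (taylor (-1) f) = f := by rw [taylor_taylor, add_neg_cancel, taylor_zero]
  calc momentFunctional w hw (f * (lam * taylor 1 g))
      = momentFunctional w hw (lam * taylor 1 (g * taylor (-1) f)) := by
        rw [taylor_mul, hf]; ring_nf
    _ = momentFunctional w hw (g * (phi * taylor (-1) f)) := by
        rw [momentFunctional_mul_taylor_one hw hpearson hphi]; ring_nf

noncomputable def hahnWeight (a1 a2 b z : ℝ) (x : ℕ) : ℝ :=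
  (ascPochhammer ℝ x).eval a1 * (ascPochhammer ℝ x).eval a2 * z ^ x /
    ((ascPochhammer ℝ x).eval (b + 1) * x.factorial)

section HahnWeight

variable {a1 a2 b z : ℝ}

theorem hahnWeight_pos (ha1 : 0 < a1) (ha2 : 0 < a2) (hb : -1 < b) (hz : 0 < z) (x : ℕ) :
    0 < hahnWeight a1 a2 b z x := by
  unfold hahnWeight
  have := ascPochhammer_pos x a1 ha1
  have := ascPochhammer_pos x a2 ha2
  have := ascPochhammer_pos x (b + 1) (by linarith)
  positivity

theorem hahnWeight_pearson (hb : -1 < b) (x : ℕ) :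
    z * (x + a1) * (x + a2) * hahnWeight a1 a2 b z x =
      (x + 1) * (x + 1 + b) * hahnWeight a1 a2 b z (x + 1) := by
  have := (ascPochhammer_pos x (b + 1) (by linarith)).ne'
  have : b + 1 + (x : ℝ) ≠ 0 := by linarith [(x.cast_nonneg : (0 : ℝ) ≤ x)]
  simp only [hahnWeight, ascPochhammer_succ_eval, Nat.factorial_succ, pow_succ]
  push_cast
  field_simp
  ring

theorem tendsto_hahnWeight_ratio (ha1 : 0 < a1) (ha2 : 0 < a2) (hb : -1 < b) (hz : 0 < z) :
    Tendsto (fun x => ‖hahnWeight a1 a2 b z (x + 1)‖ / ‖hahnWeight a1 a2 b z x‖) atTop (𝓝 z) := by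
  have hlim := ((tendsto_add_mul_div_add_mul_atTop_nhds a1 1 1 one_ne_zero).mul
    (tendsto_add_mul_div_add_mul_atTop_nhds a2 (1 + b) 1 one_ne_zero)).const_mul z
  simp only [div_one, mul_one, one_mul] at hlim
  refine hlim.congr fun x => ?_
  have hw := hahnWeight_pos ha1 ha2 hb hz x
  have : 1 + b + (x : ℝ) ≠ 0 := by linarith [(x.cast_nonneg : (0 : ℝ) ≤ x)]
  rw [Real.norm_of_nonneg (hahnWeight_pos ha1 ha2 hb hz _).le, Real.norm_of_nonneg hw.le]
  field_simp
  linear_combination hahnWeight_pearson hb x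

theorem summable_eval_mul_hahnWeight (ha1 : 0 < a1) (ha2 : 0 < a2) (hb : -1 < b) (hz0 : 0 < z)
    (hz1 : z < 1) (f : ℝ[X]) : Summable fun x : ℕ => f.eval (x : ℝ) * hahnWeight a1 a2 b z x :=
  summable_eval_mul_of_ratio_tendsto hz1
    (Eventually.of_forall fun x => (hahnWeight_pos ha1 ha2 hb hz0 x).ne')
    (tendsto_hahnWeight_ratio ha1 ha2 hb hz0) f

end HahnWeight

/-- for the generalized Hahn polynomials of type I,
A₋₁(n) = γₙ(βₙ + β_{n−1} − n + b + 1) for n ≥ 1. -/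
theorem generalized_hahn_A_minus_one
    (a1 a2 b z : ℝ) (ha1 : 0 < a1) (ha2 : 0 < a2) (hb : -1 < b)
    (hz0 : 0 < z) (hz1 : z < 1)
    (w : ℕ → ℝ)
    (hw : ∀ x : ℕ, w x =
      (ascPochhammer ℝ x).eval a1 * (ascPochhammer ℝ x).eval a2 * z ^ x /
        ((ascPochhammer ℝ x).eval (b + 1) * x.factorial))
    (P : ℕ → Polynomial ℝ) (h : ℕ → ℝ)
    (hmonic : ∀ n, (P n).Monic) (hdeg : ∀ n, (P n).natDegree = n)
    (hh : ∀ n, h n ≠ 0)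
    (horth : ∀ n m : ℕ,
      (∑' x : ℕ, (P n * P m).eval (x : ℝ) * w x) = if n = m then h n else 0)
    (β γ : ℕ → ℝ) (hγ0 : γ 0 = 0)
    (hrec : ∀ n : ℕ, X * P n = P (n + 1) + C (β n) * P n + C (γ n) * P (n - 1))
    (A : ℕ → ℤ → ℝ)
    (hA : ∀ n : ℕ,
      C z * (X + C a1) * (X + C a2) * (P n).comp (X + 1) =
        ∑ k ∈ Finset.Icc (max (-(n : ℤ)) (-2)) 2,
          A n k • P ((n : ℤ) + k).toNat) :
    ∀ n : ℕ, 1 ≤ n →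
      A n (-1) = γ n * (β n + β (n - 1) - (n : ℝ) + b + 1) := by
  intro n hn
  obtain ⟨m, rfl⟩ : ∃ m, n = m + 1 := ⟨n - 1, by omega⟩
  obtain rfl : w = hahnWeight a1 a2 b z := funext hw
  set L := momentFunctional _ (summable_eval_mul_hahnWeight ha1 ha2 hb hz0 hz1)
  have hP : IsMonicOrthogonal L P h := ⟨hmonic, hdeg, horth⟩
  have hsupp : {k ∈ Finset.Icc (max (-((m + 1 : ℕ) : ℤ)) (-2)) 2 |
      (((m + 1 : ℕ) : ℤ) + k).toNat = m} = {-1} := by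
    ext k
    simp only [Finset.mem_filter, Finset.mem_Icc, Finset.mem_singleton]
    omega
  have hexpand : L (P m * (C z * (X + C a1) * (X + C a2) * taylor 1 (P (m + 1)))) =
      A (m + 1) (-1) * h m := by
    rw [taylor_apply, C_1, hA, hP.apply_mul_sum_smul, hsupp, Finset.sum_singleton]
  have hs := (hmonic m).taylor (-1)
  have hφs_deg : (X * (X + C b) * taylor (-1) (P m)).natDegree = m + 1 + 1 := by
    rw [hs.natDegree_X_mul_X_add_C_mul, natDegree_taylor, hdeg]
  have hφs_next : (X * (X + C b) * taylor (-1) (P m)).nextCoeff = b + (P m).nextCoeff - m := by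
    rw [hs.nextCoeff_X_mul_X_add_C_mul, nextCoeff_taylor, hdeg, (hmonic m).leadingCoeff]
    ring
  have hnext := nextCoeff_succ_of_recurrence hmonic hdeg hγ0 hrec
  rw [momentFunctional_mul_mul_taylor_one (phi := X * (X + C b)) _
      (fun x => by simpa using hahnWeight_pearson hb x) (by simp),
    hP.apply_mul_of_monic ((monic_X.mul (monic_X_add_C b)).mul hs) hφs_deg, hφs_next, hnext,
    hnext, hP.apply_succ_eq hrec, ← mul_assoc] at hexpand
  rw [← mul_right_cancel₀ (hh m) hexpand, Nat.add_sub_cancel]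
  push_cast
  ring
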